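/- arXiv:0911.1154 — 7 statements merged into one kernel-verified Lean document; each statement's English description precedes it below -/
import Mathlib

section
/- If G is a finite group with Sylow 2-subgroup S and N = N_G(S) its normalizer, then j(G)/|G| ≤ |S|/|N|, where j(G) is the number of elements of G with x^2 = 1. -/
/-!
Every element with `x ^ 2 = 1` generates a `2`-group and so lies in some Sylow `2`-subgroup.
Hence `j(G) ≤ n₂ · |S|`, where `n₂ = |G : N_G(S)|` is the number of Sylow `2`-subgroups,
and multiplying by `|N_G(S)|` gives `j(G) · |N_G(S)| ≤ |G| · |S|`.
-/

open Subgroup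

section

variable {G : Type*} [Group G] {p : ℕ}

theorem IsPGroup.zpowers_of_pow_eq_one {x : G} {n : ℕ} (hx : x ^ p ^ n = 1) :
    IsPGroup p (zpowers x) := by
  rintro ⟨_, m, rfl⟩
  refine ⟨n, Subtype.ext ?_⟩
  simp only [SubmonoidClass.coe_pow, OneMemClass.coe_one]
  rw [← zpow_natCast, ← zpow_mul, mul_comm, zpow_mul, zpow_natCast, hx, one_zpow]

theorem Sylow.exists_mem_of_pow_eq_one {x : G} {n : ℕ} (hx : x ^ p ^ n = 1) :
    ∃ P : Sylow p G, x ∈ P := by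
  obtain ⟨P, hP⟩ := (IsPGroup.zpowers_of_pow_eq_one hx).exists_le_sylow
  exact ⟨P, hP (mem_zpowers x)⟩

variable [Finite G] [Fact p.Prime]

theorem Sylow.card_exists_pow_eq_one_le (P : Sylow p G) :
    Nat.card {x : G // ∃ n, x ^ p ^ n = 1} ≤ Nat.card (Sylow p G) * Nat.card P := by
  choose sylow hsylow using fun x : {x : G // ∃ n, x ^ p ^ n = 1} =>
    Sylow.exists_mem_of_pow_eq_one x.2.choose_spec
  have : Fintype (Sylow p G) := Fintype.ofFinite _
  calc _ ≤ Nat.card (Σ Q : Sylow p G, Q) :=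
        Nat.card_le_card_of_injective (fun x => ⟨sylow x, x, hsylow x⟩) fun x y hxy =>
          Subtype.ext (congrArg (fun s : Σ Q : Sylow p G, Q => (s.2 : G)) hxy)
    _ = ∑ Q : Sylow p G, Nat.card Q := Nat.card_sigma
    _ = Nat.card (Sylow p G) * Nat.card P := by
      simp only [Sylow.card_eq_multiplicity, Finset.sum_const, Finset.card_univ,
        Nat.card_eq_fintype_card, smul_eq_mul]

theorem Sylow.card_mul_card_normalizer (P : Sylow p G) :
    Nat.card (Sylow p G) * Nat.card (normalizer (P : Set G)) = Nat.card G := by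
  rw [P.card_eq_index_normalizer, index_mul_card]

end

theorem stmt_8 (G : Type*) [Group G] [Finite G] (S : Sylow 2 G) :
    Nat.card {x : G // x ^ 2 = 1} * Nat.card (Subgroup.normalizer ((S : Subgroup G) : Set G)) ≤
      Nat.card G * Nat.card (S : Subgroup G) := by
  have : Fact (Nat.Prime 2) := ⟨Nat.prime_two⟩
  have h_involutions : Nat.card {x : G // x ^ 2 = 1} ≤ Nat.card {x : G // ∃ n, x ^ 2 ^ n = 1} :=
    Nat.card_le_card_of_injective _ (Subtype.impEmbedding _ _ fun _ hx => ⟨1, hx⟩).injective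
  calc _ ≤ Nat.card (Sylow 2 G) * Nat.card S * Nat.card (normalizer (S : Set G)) :=
        Nat.mul_le_mul_right _ (h_involutions.trans S.card_exists_pow_eq_one_le)
    _ = Nat.card G * Nat.card S := by
      rw [mul_right_comm, S.card_mul_card_normalizer]
end

section
/- If G is a finite group in which more than half the elements satisfy x^2 = 1, then every Sylow 2-subgroup of G is self-normalizing, i.e., N_G(S) = S. -/
/-!
Every involution generates a 2-subgroup, hence lies in a Sylow 2-subgroup, so the number of
involutions is at most `n₂ · |S|`, where `n₂ = [G : N_G(S)]` is the number of Sylow 2-subgroups.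
Since `|G| = n₂ · |S| · [N_G(S) : S]`, a proper inclusion `S < N_G(S)` would give
`2 · #involutions ≤ 2 · n₂ · |S| ≤ |G|`.
-/

open Subgroup

namespace Sylow

variable {G : Type*} [Group G] {p : ℕ} [Fact p.Prime]

theorem exists_mem_of_pow_prime_pow_eq_one {k : ℕ} {x : G} (hx : x ^ p ^ k = 1) :
    ∃ P : Sylow p G, x ∈ P := by
  obtain ⟨n, -, hn⟩ := (Nat.dvd_prime_pow Fact.out).1 (orderOf_dvd_of_pow_eq_one hx)
  obtain ⟨P, hP⟩ := (IsPGroup.of_card ((Nat.card_zpowers x).trans hn)).exists_le_sylow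
  exact ⟨P, hP (mem_zpowers x)⟩

variable [Finite G]

theorem card_pow_prime_pow_eq_one_le (k : ℕ) (P : Sylow p G) :
    Nat.card {x : G // x ^ p ^ k = 1} ≤ Nat.card (Sylow p G) * Nat.card P := by
  have := Fintype.ofFinite (Sylow p G)
  choose Q hQ using fun x : {x : G // x ^ p ^ k = 1} ↦ exists_mem_of_pow_prime_pow_eq_one x.2
  have hinj : Function.Injective
      fun x : {x : G // x ^ p ^ k = 1} ↦ (⟨Q x, x, hQ x⟩ : Σ R : Sylow p G, (R : Subgroup G)) :=
    fun _ _ hxy ↦ Subtype.ext (congrArg (fun r ↦ (r.2 : G)) hxy)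
  calc Nat.card {x : G // x ^ p ^ k = 1}
      ≤ Nat.card (Σ R : Sylow p G, (R : Subgroup G)) := Nat.card_le_card_of_injective _ hinj
    _ = ∑ R : Sylow p G, Nat.card (R : Subgroup G) := Nat.card_sigma
    _ = Nat.card (Sylow p G) * Nat.card P := by
      simp only [card_eq_multiplicity, Finset.sum_const, Finset.card_univ, smul_eq_mul,
        Nat.card_eq_fintype_card]

theorem card_mul_card_mul_relIndex_normalizer (P : Sylow p G) :
    Nat.card (Sylow p G) * Nat.card P *
      (P : Subgroup G).relIndex (normalizer ((P : Subgroup G) : Set G)) = Nat.card G := by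
  have hsylow : Nat.card (Sylow p G) = (normalizer ((P : Subgroup G) : Set G)).index :=
    P.card_eq_index_normalizer
  rw [hsylow, mul_comm, ← mul_assoc, relIndex_mul_index le_normalizer,
    mul_comm, card_mul_index]

end Sylow

theorem stmt_9 (G : Type*) [Group G] [Finite G]
    (h : 2 * Nat.card {x : G // x ^ 2 = 1} > Nat.card G) (S : Sylow 2 G) :
    Subgroup.normalizer ((S : Subgroup G) : Set G) = S := by
  refine le_antisymm ?_ le_normalizer
  by_contra hne
  have hcard := S.card_mul_card_mul_relIndex_normalizer
  set r := (S : Subgroup G).relIndex (normalizer ((S : Subgroup G) : Set G))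
  have hr : 2 ≤ r := by
    have hr0 : r ≠ 0 := fun hr0 ↦ by
      rw [hr0, mul_zero] at hcard
      exact Nat.card_pos.ne hcard
    have hr1 : r ≠ 1 := mt relIndex_eq_one.1 hne
    omega
  have hcount : Nat.card {x : G // x ^ 2 = 1} ≤ Nat.card (Sylow 2 G) * Nat.card S :=
    S.card_pow_prime_pow_eq_one_le 1
  refine lt_irrefl (Nat.card G) ?_
  calc
    Nat.card G < 2 * Nat.card {x : G // x ^ 2 = 1} := h
    _ ≤ 2 * (Nat.card (Sylow 2 G) * Nat.card S) := by gcongr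
    _ ≤ Nat.card (Sylow 2 G) * Nat.card S * r := by rw [mul_comm 2]; gcongr
    _ = Nat.card G := hcard
end

section
/- If G is a finite group in which strictly more than half of the elements satisfy x^2 = 1, then every element of the center Z(G) satisfies z^2 = 1 (i.e., Z(G) is an elementary abelian 2-group). -/
/-! The involutions form more than half of `G`, so they meet their translate by `z`: some
involution `x` has `z * x` an involution too, and for central `z` this gives
`1 = (z * x) ^ 2 = z ^ 2 * x ^ 2 = z ^ 2`. -/

open Pointwise

theorem Set.inter_smul_set_nonempty_of_card_lt_two_mul {α β : Type*} [Group α] [MulAction α β]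
    [Finite β] (a : α) {s : Set β} (hs : Nat.card β < 2 * s.ncard) : (s ∩ a • s).Nonempty := by
  refine Set.not_disjoint_iff_nonempty_inter.mp fun hdisj => ?_
  have := Set.ncard_le_card (s ∪ a • s)
  rw [Set.ncard_union_eq hdisj, Set.ncard_smul_set] at this
  omega

theorem Commute.sq_eq_one_of_mul_sq_eq_one {M : Type*} [Monoid M] {a b : M} (hab : Commute a b)
    (hb : b ^ 2 = 1) (hab2 : (a * b) ^ 2 = 1) : a ^ 2 = 1 := by
  rwa [hab.mul_pow, hb, mul_one] at hab2

theorem stmt_10 (G : Type*) [Group G] [Finite G]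
    (h : 2 * Nat.card {x : G // x ^ 2 = 1} > Nat.card G) :
    ∀ z ∈ Subgroup.center G, z ^ 2 = 1 := by
  intro z hz
  obtain ⟨_, hy, x, hx, rfl⟩ :=
    Set.inter_smul_set_nonempty_of_card_lt_two_mul z (s := {x : G | x ^ 2 = 1}) h
  exact Commute.sq_eq_one_of_mul_sq_eq_one (Subgroup.mem_center_iff.mp hz x).symm hx hy
end

section
/- If G is a finite group of order 2^n · m with m odd and n ≥ 1, then the number of elements x of G with x^2 = 1 is at most 2^{n-1}(m + 1). -/
/-!
Fix a Sylow 2-subgroup `P`, of order `2 ^ n` and index `m`. An involution `x ∉ P` cannot normalize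
`P`, since a 2-element normalizing a Sylow 2-subgroup lies in it; hence `P ⊓ x⁻¹ P x` is a proper
subgroup of `P`, of order at most `2 ^ (n - 1)`. The involutions in the coset `x P` are the `x h`
with `h ∈ P` and `x h x⁻¹ = h⁻¹ ∈ P`, so each of the `m - 1` cosets other than `P` contains at most
`2 ^ (n - 1)` involutions, and `P` itself at most `2 ^ n`.
-/

open Finset

namespace Subgroup

variable {G : Type*} [Group G]

theorem two_mul_card_le_of_lt {H K : Subgroup G} [Finite K] (hHK : H < K) :
    2 * Nat.card H ≤ Nat.card K := by
  obtain ⟨k, hk⟩ := card_dvd_of_le hHK.le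
  have hK : Nat.card K ≠ 0 := Nat.card_pos.ne'
  have hk1 : k ≠ 1 := by
    rintro rfl
    exact hHK.ne (eq_of_le_of_card_ge hHK.le (by rw [hk, mul_one]))
  have hk0 : k ≠ 0 := by rintro rfl; exact hK (by rw [hk, mul_zero])
  rw [hk, mul_comm]
  exact Nat.mul_le_mul_left (Nat.card H) (by omega)

theorem two_mul_card_conj_mem_le [Finite G] (H : Subgroup G) {x : G}
    (hx : x ∉ normalizer (H : Set G)) :
    2 * Nat.card {h : G // h ∈ H ∧ x * h * x⁻¹ ∈ H} ≤ Nat.card H := by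
  let K := H ⊓ H.comap (MulAut.conj x).toMonoidHom
  have hKH : K < H := by
    refine lt_of_le_of_ne inf_le_left fun hK => hx (mem_normalizer_fintype fun h hh => ?_)
    exact (hK.ge hh).2
  calc 2 * Nat.card {h : G // h ∈ H ∧ x * h * x⁻¹ ∈ H} = 2 * Nat.card K := rfl
    _ ≤ Nat.card H := two_mul_card_le_of_lt hKH

end Subgroup

namespace Sylow

variable {G : Type*} [Group G] {p : ℕ} [Fact p.Prime]

theorem mem_of_pow_eq_one_of_mem_normalizer (P : Sylow p G) {x : G} {k : ℕ}
    (hx : x ^ p ^ k = 1) (hxP : x ∈ Subgroup.normalizer (P : Set G)) : x ∈ P := by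
  obtain ⟨j, -, hj⟩ := (Nat.dvd_prime_pow Fact.out).mp (orderOf_dvd_of_pow_eq_one hx)
  have hpow : IsPGroup p (Subgroup.zpowers x) := IsPGroup.of_card ((Nat.card_zpowers x).trans hj)
  have hmem : x ∈ Subgroup.zpowers x ⊓ Subgroup.normalizer (P : Set G) :=
    ⟨Subgroup.mem_zpowers x, hxP⟩
  rw [hpow.inf_normalizer_sylow P] at hmem
  exact hmem.2

variable [Finite G]

theorem card_eq_pow_of_card_eq (P : Sylow p G) {n m : ℕ} (hm : ¬p ∣ m)
    (hG : Nat.card G = p ^ n * m) : Nat.card P = p ^ n := by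
  have hp : p.Prime := Fact.out
  have hcop : (p ^ n).Coprime m := .pow_left n ((Nat.Prime.coprime_iff_not_dvd hp).mpr hm)
  rw [P.card_eq_multiplicity, hG, Nat.factorization_mul_apply_of_coprime hcop,
    Nat.factorization_eq_zero_of_not_dvd hm, hp.factorization_pow, Finsupp.single_eq_same, add_zero]

theorem two_mul_card_sq_eq_one_coset_le (P : Sylow 2 G) {c : G ⧸ (P : Subgroup G)}
    (hc : c ≠ ((1 : G) : G ⧸ (P : Subgroup G))) :
    2 * Nat.card {y : G // y ^ 2 = 1 ∧ (y : G ⧸ (P : Subgroup G)) = c} ≤ Nat.card P := by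
  rcases isEmpty_or_nonempty {y : G // y ^ 2 = 1 ∧ (y : G ⧸ (P : Subgroup G)) = c} with
    _ | ⟨x, hx, rfl⟩
  · simp
  have hxP : x ∉ P := fun hxP =>
    hc (QuotientGroup.eq.mpr (by rw [mul_one]; exact (P : Subgroup G).inv_mem hxP))
  have hxN : x ∉ Subgroup.normalizer (P : Set G) := fun hxN =>
    hxP (P.mem_of_pow_eq_one_of_mem_normalizer (k := 1) (by rwa [pow_one]) hxN)
  have hxx : x⁻¹ = x := inv_eq_of_mul_eq_one_left (by rwa [← sq])
  let f : {y : G // y ^ 2 = 1 ∧ (y : G ⧸ (P : Subgroup G)) = x} →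
      {h : G // h ∈ P ∧ x * h * x⁻¹ ∈ P} := fun y =>
    have hy : x⁻¹ * y ∈ P := QuotientGroup.eq.mp y.2.2.symm
    ⟨x⁻¹ * y, hy, by
      have hyy : (y : G)⁻¹ = y := inv_eq_of_mul_eq_one_left (by rw [← sq, y.2.1])
      have : x * (x⁻¹ * y) * x⁻¹ = (x⁻¹ * y)⁻¹ := by
        rw [mul_inv_cancel_left, mul_inv_rev, inv_inv, hxx, hyy]
      rw [this]; exact P.inv_mem hy⟩
  have hf : Function.Injective f := fun _ _ h =>
    Subtype.ext (mul_left_cancel (congrArg Subtype.val h))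
  calc 2 * Nat.card {y : G // y ^ 2 = 1 ∧ (y : G ⧸ (P : Subgroup G)) = x}
      ≤ 2 * Nat.card {h : G // h ∈ P ∧ x * h * x⁻¹ ∈ P} :=
        Nat.mul_le_mul_left 2 (Nat.card_le_card_of_injective f hf)
    _ ≤ Nat.card P := (P : Subgroup G).two_mul_card_conj_mem_le hxN

theorem two_mul_card_sq_eq_one_le (P : Sylow 2 G) :
    2 * Nat.card {x : G // x ^ 2 = 1} ≤ Nat.card P * ((P : Subgroup G).index + 1) := by
  classical
  have := Fintype.ofFinite G
  let q : G → G ⧸ (P : Subgroup G) := (↑)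
  have hfiber : ∀ c, 2 * #{x | x ^ 2 = 1 ∧ q x = c} ≤
      Nat.card P + if c = q 1 then Nat.card P else 0 := by
    intro c
    by_cases hc : c = q 1
    · have hsub : ({x | x ^ 2 = 1 ∧ q x = c} : Finset G) ⊆
          ({x | x ∈ (P : Subgroup G)} : Finset G) := by
        intro x hx
        simp only [mem_filter, mem_univ, true_and, hc] at hx ⊢
        simpa using QuotientGroup.eq.mp hx.2.symm
      have hP : #({x | x ∈ (P : Subgroup G)} : Finset G) = Nat.card P := by
        rw [← Fintype.card_subtype, Nat.card_eq_fintype_card]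
      rw [if_pos hc]
      have := card_le_card hsub
      omega
    · rw [if_neg hc, add_zero, ← Fintype.card_subtype, ← Nat.card_eq_fintype_card]
      exact P.two_mul_card_sq_eq_one_coset_le hc
  calc 2 * Nat.card {x : G // x ^ 2 = 1} = ∑ c, 2 * #{x | x ^ 2 = 1 ∧ q x = c} := by
        rw [Nat.card_eq_fintype_card, Fintype.card_subtype,
          card_eq_sum_card_fiberwise (f := q) (t := univ) (by simp), mul_sum]
        simp only [filter_filter]
    _ ≤ ∑ c, (Nat.card P + if c = q 1 then Nat.card P else 0) := sum_le_sum fun c _ => hfiber c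
    _ = Nat.card P * ((P : Subgroup G).index + 1) := by
        rw [sum_add_distrib, sum_const, sum_ite_eq']
        simp only [card_univ, Nat.card_eq_fintype_card, smul_eq_mul, mem_univ, ↓reduceIte,
          Subgroup.index]
        ring

end Sylow

theorem stmt_12 (G : Type*) [Group G] [Finite G] (n m : ℕ) (hm : Odd m)
    (hn : 1 ≤ n) (hcard : Nat.card G = 2 ^ n * m) :
    Nat.card {x : G // x ^ 2 = 1} ≤ 2 ^ (n - 1) * (m + 1) := by
  have : Fact (Nat.Prime 2) := ⟨Nat.prime_two⟩
  obtain ⟨P⟩ : Nonempty (Sylow 2 G) := inferInstance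
  have hP : Nat.card P = 2 ^ n := P.card_eq_pow_of_card_eq hm.not_two_dvd_nat hcard
  have hindex : (P : Subgroup G).index = m := by
    have h := (P : Subgroup G).card_mul_index
    rw [hP, hcard] at h
    exact Nat.eq_of_mul_eq_mul_left (by positivity) h
  have h := P.two_mul_card_sq_eq_one_le
  rw [hP, hindex, ← Nat.sub_add_cancel hn, pow_succ] at h
  linarith
end

section
/- If G is a finite group of order 2^n · m with m odd, m > 1 and n ≥ 1, then the proportion of elements x with x^2 = 1 is at most 2/3. -/
/-!
Take `g` of odd prime order `p` and let `I` be the set of elements inverting `g` by conjugation.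
If `x` and `x * s`, with `1 ≠ s ∈ ⟨g⟩`, both square to `1`, then `x` inverts `s`, hence inverts
`⟨s⟩ = ⟨g⟩`. So the cosets `x⟨g⟩` of the solutions `x ∉ I` of `x ^ 2 = 1` are pairwise disjoint
and lie outside `I`, giving at most `(|G| - |I|) / p` such solutions. Left multiplication by an
element of `I` maps `I` into the centralizer of `g`, which is disjoint from `I`, so `2 |I| ≤ |G|`
and the number of solutions is at most `|I| + (|G| - |I|) / 3 ≤ 2 |G| / 3`.
-/

open Set Subgroup

section

variable {G : Type*} [Group G]

def inverters (g : G) : Set G := {u | u * g * u⁻¹ = g⁻¹}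

lemma conj_eq_inv_of_sq_eq_one {x s : G} (hx : x ^ 2 = 1) (hxs : (x * s) ^ 2 = 1) :
    x * s * x⁻¹ = s⁻¹ := by
  have hxinv : x⁻¹ = x := inv_eq_of_mul_eq_one_right (by rwa [← sq])
  rw [hxinv]
  rw [sq, ← mul_assoc] at hxs
  exact eq_inv_of_mul_eq_one_left hxs

lemma conj_eq_inv_of_mem_zpowers {x s t : G} (h : x * s * x⁻¹ = s⁻¹) (ht : t ∈ zpowers s) :
    x * t * x⁻¹ = t⁻¹ := by
  obtain ⟨k, rfl⟩ := mem_zpowers_iff.mp ht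
  rw [← conj_zpow, h, inv_zpow]

lemma mem_zpowers_of_mem_zpowers_of_orderOf_prime {g s : G} (hg : (orderOf g).Prime)
    (hs : s ∈ zpowers g) (hs1 : s ≠ 1) : g ∈ zpowers s := by
  obtain ⟨k, rfl⟩ := mem_zpowers_iff.mp hs
  refine mem_zpowers_zpow_iff.mpr (Nat.Coprime.symm ((hg.coprime_iff_not_dvd).mpr ?_))
  rwa [← Int.natCast_dvd, orderOf_dvd_iff_zpow_eq_one]

lemma mul_mem_inverters_iff {g u s : G} (hs : s ∈ zpowers g) :
    u * s ∈ inverters g ↔ u ∈ inverters g := by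
  obtain ⟨k, rfl⟩ := mem_zpowers_iff.mp hs
  have : u * g ^ k * g * (u * g ^ k)⁻¹ = u * g * u⁻¹ := by group
  simp only [inverters, mem_ofPred_eq, this]

lemma two_mul_ncard_inverters_le [Finite G] {g : G} (hg : g ^ 2 ≠ 1) :
    2 * (inverters g).ncard ≤ Nat.card G := by
  rcases (inverters g).eq_empty_or_nonempty with h | ⟨u, hu⟩
  · simp [h]
  have hdisj : Disjoint (inverters g) ((u * ·) '' inverters g) := by
    refine Set.disjoint_left.mpr ?_
    rintro _ hw ⟨v, hv, rfl⟩
    have : u * v * g * (u * v)⁻¹ = g := by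
      calc u * v * g * (u * v)⁻¹ = u * (v * g * v⁻¹) * u⁻¹ := by group
        _ = (u * g * u⁻¹)⁻¹ := by rw [hv]; group
        _ = g := by rw [hu, inv_inv]
    exact hg (by rw [sq, ← mul_eq_one_iff_eq_inv.mpr (this.symm.trans hw)])
  calc 2 * (inverters g).ncard
      = (inverters g ∪ (u * ·) '' inverters g).ncard := by
        rw [ncard_union_eq hdisj, ncard_image_of_injective _ (mul_right_injective u)]; ring
    _ ≤ Nat.card G := ncard_le_card _

lemma eq_one_of_sq_eq_one_of_notMem_inverters {g x s : G} (hg : (orderOf g).Prime)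
    (hx : x ^ 2 = 1) (hxI : x ∉ inverters g) (hs : s ∈ zpowers g) (hxs : (x * s) ^ 2 = 1) :
    s = 1 := by
  by_contra hs1
  exact hxI (conj_eq_inv_of_mem_zpowers (conj_eq_inv_of_sq_eq_one hx hxs)
    (mem_zpowers_of_mem_zpowers_of_orderOf_prime hg hs hs1))

lemma orderOf_mul_ncard_sq_eq_one_diff_inverters_le [Finite G] {g : G} (hg : (orderOf g).Prime) :
    orderOf g * ({x : G | x ^ 2 = 1} \ inverters g).ncard ≤ (inverters g)ᶜ.ncard := by
  have hmaps : ∀ q ∈ ({x : G | x ^ 2 = 1} \ inverters g) ×ˢ (zpowers g : Set G),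
      q.1 * q.2 ∈ (inverters g)ᶜ :=
    fun q hq ↦ (mul_mem_inverters_iff hq.2).not.mpr hq.1.2
  have hinj : InjOn (fun q : G × G ↦ q.1 * q.2)
      (({x : G | x ^ 2 = 1} \ inverters g) ×ˢ (zpowers g : Set G)) := by
    rintro ⟨x, s⟩ ⟨⟨hx, hxI⟩, hs⟩ ⟨y, t⟩ ⟨⟨hy, -⟩, ht⟩ hxy
    change x * s = y * t at hxy
    have hyx : y = x * (s * t⁻¹) := by rw [← mul_assoc, hxy, mul_inv_cancel_right]
    have hst : s * t⁻¹ = 1 :=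
      eq_one_of_sq_eq_one_of_notMem_inverters hg hx hxI (mul_mem hs (inv_mem ht)) (hyx ▸ hy)
    rw [mul_inv_eq_one] at hst
    subst hst
    rw [mul_left_inj] at hxy
    rw [hxy]
  have := ncard_le_ncard_of_injOn _ hmaps hinj
  rwa [ncard_prod, ← Nat.card_coe_set_eq (zpowers g : Set G), SetLike.coe_sort_coe,
    Nat.card_zpowers, mul_comm] at this

theorem three_mul_card_sq_eq_one_le [Finite G] {p : ℕ} (hp : p.Prime) (hp2 : p ≠ 2)
    (hpG : p ∣ Nat.card G) : 3 * Nat.card {x : G // x ^ 2 = 1} ≤ 2 * Nat.card G := by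
  have := Fact.mk hp
  obtain ⟨g, hg⟩ := exists_prime_orderOf_dvd_card' p hpG
  have hg2 : g ^ 2 ≠ 1 := fun h ↦
    hp2 ((Nat.prime_dvd_prime_iff_eq hp Nat.prime_two).mp (hg ▸ orderOf_dvd_of_pow_eq_one h))
  have hp3 : 3 ≤ p := hp.two_le.lt_of_ne' hp2
  have houtside := orderOf_mul_ncard_sq_eq_one_diff_inverters_le (hg ▸ hp : (orderOf g).Prime)
  have hsplit := ncard_le_ncard_sdiff_add_ncard {x : G | x ^ 2 = 1} (inverters g)
  have hcompl := ncard_add_ncard_compl (inverters g)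
  have hinv := two_mul_ncard_inverters_le hg2
  have h3 := Nat.mul_le_mul_right (({x : G | x ^ 2 = 1} \ inverters g).ncard) hp3
  change 3 * {x : G | x ^ 2 = 1}.ncard ≤ _
  rw [hg] at houtside
  omega

end

theorem stmt_13_general (G : Type*) [Group G] [Finite G] (n m : ℕ) (hm : Odd m)
    (hm1 : 1 < m) (hcard : Nat.card G = 2 ^ n * m) :
    3 * Nat.card {x : G // x ^ 2 = 1} ≤ 2 * Nat.card G := by
  have hp : m.minFac.Prime := Nat.minFac_prime hm1.ne'
  refine three_mul_card_sq_eq_one_le hp (fun h ↦ ?_) (hcard ▸ dvd_mul_of_dvd_right m.minFac_dvd _)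
  exact (Nat.not_even_iff_odd.mpr hm) (even_iff_two_dvd.mpr (h ▸ m.minFac_dvd))

theorem stmt_13 (G : Type*) [Group G] [Finite G] (n m : ℕ) (hm : Odd m)
    (hm1 : 1 < m) (hn : 1 ≤ n) (hcard : Nat.card G = 2 ^ n * m) :
    3 * Nat.card {x : G // x ^ 2 = 1} ≤ 2 * Nat.card G :=
  stmt_13_general G n m hm hm1 hcard
end

section
/- If G is a finite group in which strictly more than 3/4 of the elements satisfy x^2 = 1, then every element of G satisfies x^2 = 1; in particular G is an elementary abelian 2-group. -/
/-!
Let `S` be the set of involutions. If `a`, `x` and `a * x` are involutions, then `a` and `x`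
commute. For an involution `a`, the sets `S` and `a⁻¹ • S` each fill more than `3/4` of `G`, so
their intersection fills more than half of it; it lies in the centralizer of `a`, which is
therefore all of `G`. So every involution is central. Finally `S` and `g • S` fill more than half
of `G` each and must meet, so `g` is a product of two commuting involutions, hence an involution.
-/

open Pointwise

theorem Subgroup.eq_top_of_card_lt_two_mul {G : Type*} [Group G] [Finite G] (H : Subgroup G)
    (h : Nat.card G < 2 * Nat.card H) : H = ⊤ := by
  by_contra hH
  have := H.one_lt_index_of_ne_top hH
  rw [← H.index_mul_card] at h
  nlinarith

theorem Set.two_mul_ncard_le_card_add_ncard_inter_smul {G : Type*} [Group G] [Finite G]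
    (S : Set G) (g : G) : 2 * S.ncard ≤ Nat.card G + (S ∩ g • S).ncard := by
  have := Set.ncard_inter_add_ncard_union S (g • S)
  have := (S ∪ g • S).ncard_le_card
  rw [Set.ncard_smul_set] at *
  omega

theorem commute_of_sq_eq_one {M : Type*} [Monoid M] {a b : M} (ha : a ^ 2 = 1) (hb : b ^ 2 = 1)
    (hab : (a * b) ^ 2 = 1) : Commute a b :=
  calc a * b = a * ((a * b) * (a * b)) * b := by rw [← sq, hab, mul_one]
    _ = (a * a) * (b * a) * (b * b) := by simp only [mul_assoc]
    _ = b * a := by rw [← sq, ← sq, ha, hb, one_mul, mul_one]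

theorem mem_center_of_sq_eq_one {G : Type*} [Group G] [Finite G]
    (h : 3 * Nat.card G < 4 * {x : G | x ^ 2 = 1}.ncard) {a : G}
    (ha : a ^ 2 = 1) : a ∈ Subgroup.center G := by
  set S := {x : G | x ^ 2 = 1}
  have hsub : S ∩ a⁻¹ • S ⊆ Subgroup.centralizer {a} := by
    rintro x ⟨hx, hax⟩
    rw [Set.mem_smul_set_iff_inv_smul_mem, inv_inv, smul_eq_mul] at hax
    exact Subgroup.mem_centralizer_singleton_iff.mpr (commute_of_sq_eq_one ha hx hax).symm
  have hcard : Nat.card G < 2 * Nat.card (Subgroup.centralizer {a}) := by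
    have := S.two_mul_ncard_le_card_add_ncard_inter_smul a⁻¹
    have := Set.ncard_le_ncard hsub
    rw [← SetLike.coe_sort_coe, Nat.card_coe_set_eq]
    omega
  have htop := (Subgroup.centralizer {a}).eq_top_of_card_lt_two_mul hcard
  exact Subgroup.centralizer_eq_top_iff_subset.mp htop rfl

theorem stmt_14 (G : Type*) [Group G] [Finite G]
    (h : 4 * Nat.card {x : G // x ^ 2 = 1} > 3 * Nat.card G) :
    ∀ x : G, x ^ 2 = 1 := by
  set S := {x : G | x ^ 2 = 1}
  have hS : 3 * Nat.card G < 4 * S.ncard := h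
  intro g
  obtain ⟨y, hy, s, hs, hgs⟩ : (S ∩ g • S).Nonempty := by
    apply Set.nonempty_inter_of_lt_ncard_add_ncard
    rw [Set.ncard_smul_set]
    omega
  have hs' : s⁻¹ ^ 2 = 1 := by rw [inv_pow, hs.out, inv_one]
  have hcomm : Commute y s⁻¹ := Subgroup.mem_center_iff.mp (mem_center_of_sq_eq_one hS hs') y
  have hg : g = y * s⁻¹ := eq_mul_inv_of_mul_eq hgs
  rw [hg, hcomm.mul_pow, hy.out, hs', one_mul]
end

section
/- If G is a finite group with 4 · j(G) > 3 · |G| (where j counts elements with x^2 = 1), then G has order a power of 2. -/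
/-!
Let `S = {x | x ^ 2 = 1}`, so `|S| > 3|G|/4`. For `a ∈ S`, the set `S ∩ aS` has more than `|G|/2`
elements and lies in the centralizer of `a`, since two elements of order dividing 2 whose product
also has order dividing 2 commute. A subgroup with more than half of the elements of `G` is `G`,
so `S` is central. Every `g` is `s t⁻¹` with `s, t ∈ S` (as `S ∩ gS ≠ ∅`), hence `g ^ 2 = 1`, and a
group of exponent 2 is a 2-group.
-/

open scoped Pointwise

theorem Set.ncard_add_ncard_le_card_add_ncard_inter {α : Type*} [Finite α] (s t : Set α) :
    s.ncard + t.ncard ≤ Nat.card α + (s ∩ t).ncard := by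
  rw [← Set.ncard_union_add_ncard_inter]
  exact Nat.add_le_add_right (s ∪ t).ncard_le_card _

theorem exists_mul_inv_eq_of_card_lt_two_mul_ncard {G : Type*} [Group G] [Finite G] {A : Set G}
    (hA : Nat.card G < 2 * A.ncard) (g : G) : ∃ a ∈ A, ∃ b ∈ A, a * b⁻¹ = g := by
  have hcard := A.ncard_add_ncard_le_card_add_ncard_inter (g • A)
  rw [Set.ncard_smul_set] at hcard
  obtain ⟨_, haA, b, hbA, rfl⟩ : (A ∩ g • A).Nonempty :=
    Set.nonempty_of_ncard_ne_zero (by omega)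
  exact ⟨_, haA, b, hbA, by simp⟩

theorem Subgroup.eq_top_of_card_lt_two_mul_ncard {G : Type*} [Group G] [Finite G]
    (H : Subgroup G) {A : Set G} (hAH : A ⊆ H) (hA : Nat.card G < 2 * A.ncard) : H = ⊤ := by
  refine eq_top_iff.2 fun g _ ↦ ?_
  obtain ⟨a, ha, b, hb, rfl⟩ := exists_mul_inv_eq_of_card_lt_two_mul_ncard hA g
  exact H.mul_mem (hAH ha) (H.inv_mem (hAH hb))

theorem commute_of_sq_eq_one_s15 {G : Type*} [Group G] {x y : G} (hx : x ^ 2 = 1) (hy : y ^ 2 = 1)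
    (hxy : (x * y) ^ 2 = 1) : Commute x y := by
  have inv_eq_self {z : G} (hz : z ^ 2 = 1) : z⁻¹ = z := mul_eq_one_iff_inv_eq.1 (by rwa [← sq])
  calc x * y = (x * y)⁻¹ := (inv_eq_self hxy).symm
    _ = y * x := by rw [mul_inv_rev, inv_eq_self hx, inv_eq_self hy]

theorem commute_of_sq_eq_one_of_three_mul_card_lt {G : Type*} [Group G] [Finite G]
    (h : 3 * Nat.card G < 4 * {x : G | x ^ 2 = 1}.ncard) {a : G} (ha : a ^ 2 = 1) (b : G) :
    Commute a b := by
  set S := {x : G | x ^ 2 = 1}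
  have hsub : S ∩ a • S ⊆ Subgroup.centralizer {a} := by
    rintro _ ⟨hy, s, hs, rfl⟩
    have has : Commute a s := commute_of_sq_eq_one_s15 ha hs hy
    exact Subgroup.mem_centralizer_singleton_iff.2 ((Commute.refl a).mul_left has.symm)
  have hcard := S.ncard_add_ncard_le_card_add_ncard_inter (a • S)
  rw [Set.ncard_smul_set] at hcard
  have htop := (Subgroup.centralizer {a}).eq_top_of_card_lt_two_mul_ncard hsub (by omega)
  exact (Subgroup.mem_centralizer_singleton_iff.1 (htop ▸ Subgroup.mem_top b)).symm

theorem stmt_15 (G : Type*) [Group G] [Finite G]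
    (h : 4 * Nat.card {x : G // x ^ 2 = 1} > 3 * Nat.card G) :
    ∃ n : ℕ, Nat.card G = 2 ^ n := by
  have h' : 3 * Nat.card G < 4 * {x : G | x ^ 2 = 1}.ncard := h
  have sq_eq_one (g : G) : g ^ 2 = 1 := by
    obtain ⟨s, hs, t, ht, rfl⟩ :=
      exists_mul_inv_eq_of_card_lt_two_mul_ncard (A := {x : G | x ^ 2 = 1}) (by omega) g
    rw [(commute_of_sq_eq_one_of_three_mul_card_lt h' hs t⁻¹).mul_pow, inv_pow, hs, ht.out,
      inv_one, one_mul]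
  exact IsPGroup.iff_card.1 fun g ↦ ⟨1, by simpa using sq_eq_one g⟩
end
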